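/- Assume char F ≠ 2 and let M be the 4×4 matrix (1/2)·[[1,−1,−1,1],[−1,1,−1,1],[−1,−1,1,1],[−1,−1,−1,−1]] acting on V = F^4 (column vectors). Then the linear map θ of V^σ[G^×] = span{v g_i : v ∈ V, i ∈ I} determined by θ(v g_i) = (Mv) g_i is a Lie algebra automorphism satisfying θ^3 = id, and its fixed subalgebra {x ∈ V^σ[G^×] : θ(x) = x} equals span{(a,b,c,0) g_i : a,b,c ∈ F with a+b+c = 0, i ∈ I}. -/

import Mathlib

namespace GGA

noncomputable section

variable (F : Type*) [Field F]

/-- The labelling `g_0, …, g_7` of the eight elements of `G = (ℤ/2ℤ)³`: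
`g_0=(0,0,0), g_1=(1,0,0), g_2=(0,1,0), g_3=(0,0,1), g_4=(1,1,0), g_5=(0,1,1),
g_6=(1,1,1), g_7=(1,0,1)`. -/
def lab : Fin 8 → Fin 3 → ZMod 2 :=
  ![![0, 0, 0], ![1, 0, 0], ![0, 1, 0], ![0, 0, 1],
    ![1, 1, 0], ![0, 1, 1], ![1, 1, 1], ![1, 0, 1]]

/-- `star i j` is the unique index `k ∈ {0,…,7}` with `g_i + g_j = g_k`
(the labelling `lab` is a bijection). -/
def star (i j : Fin 8) : Fin 8 := Function.invFun lab (lab i + lab j)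

/-- The formula for `σ_{i,i+1}(r,s)`. -/
def f1 (r s : Fin 4 → F) : Fin 4 → F :=
  ![-(r 1 * s 0) - r 2 * s 2, -(r 1 * s 2) - r 2 * s 0,
    r 0 * s 1 + r 3 * s 3, r 0 * s 3 + r 3 * s 1]

/-- The formula for `σ_{i,i+2}(r,s)`. -/
def f2 (r s : Fin 4 → F) : Fin 4 → F :=
  ![r 1 * s 2 + r 3 * s 3, -(r 0 * s 0) - r 2 * s 1,
    -(r 0 * s 1) - r 2 * s 0, r 1 * s 3 + r 3 * s 2]

/-- The formula for `σ_{i,i+4}(r,s)`. -/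
def f4 (r s : Fin 4 → F) : Fin 4 → F :=
  ![-(r 0 * s 1) - r 1 * s 2, r 2 * s 0 + r 3 * s 3,
    -(r 0 * s 2) - r 1 * s 1, r 2 * s 3 + r 3 * s 0]

/-- The twist `σ : G × G → Bil(V × V, V)`, `V = F⁴`, written in terms of the indices:
`σ i j r s = σ_{i,j}(r,s)`.  For `i, j ∈ I = {1,…,7}` the value depends on the
difference `j - i (mod 7)`, matching the definition
`σ_{i,i+1}, σ_{i,i+2}, σ_{i,i+4}` explicit, `σ_{0,i}=σ_{i,0}=σ_{0,0}=σ_{i,i}=0`,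
`σ_{i,i+3}(r,s)=-σ_{i,i+4}(s,r)`, `σ_{i,i+5}(r,s)=-σ_{i,i+2}(s,r)`,
`σ_{i,i+6}(r,s)=-σ_{i,i+1}(s,r)`. -/
def sigma (i j : Fin 8) (r s : Fin 4 → F) : Fin 4 → F :=
  if i = 0 ∨ j = 0 ∨ i = j then 0
  else if ((j : ℕ) + 7 - (i : ℕ)) % 7 = 1 then f1 F r s
  else if ((j : ℕ) + 7 - (i : ℕ)) % 7 = 2 then f2 F r s
  else if ((j : ℕ) + 7 - (i : ℕ)) % 7 = 3 then -f4 F s r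
  else if ((j : ℕ) + 7 - (i : ℕ)) % 7 = 4 then f4 F r s
  else if ((j : ℕ) + 7 - (i : ℕ)) % 7 = 5 then -f2 F s r
  else -f1 F s r

/-- `single i r` is the formal sum `r gᵢ` in `V^σ[G]`, viewed as a function `G → V`. -/
def single (i : Fin 8) (r : Fin 4 → F) : Fin 8 → Fin 4 → F :=
  fun k => if k = i then r else 0

/-- The product of `V^σ[G]`: the unique bilinear extension of
`[r gᵢ, s gⱼ] = σ_{i,j}(r,s) g_{i*j}`. -/
def bracket (x y : Fin 8 → Fin 4 → F) : Fin 8 → Fin 4 → F :=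
  fun k => ∑ i : Fin 8, ∑ j : Fin 8, if star i j = k then sigma F i j (x i) (y j) else 0


/-- The subspace `V^σ[G^×]` of `V^σ[G]` spanned by `{v gᵢ : v ∈ V, i ∈ I}`. -/
def VGx : Submodule F (Fin 8 → Fin 4 → F) :=
  Submodule.span F {z : Fin 8 → Fin 4 → F | ∃ i : Fin 8, i ≠ 0 ∧ ∃ r : Fin 4 → F, z = single F i r}

/-- The matrix `M = ½ [[1,−1,−1,1],[−1,1,−1,1],[−1,−1,1,1],[−1,−1,−1,−1]]`. -/
def Mtriality : Matrix (Fin 4) (Fin 4) F :=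
  (2 : F)⁻¹ • !![1, -1, -1, 1; -1, 1, -1, 1; -1, -1, 1, 1; -1, -1, -1, -1]

/-- The triality map `θ(v gᵢ) = (Mv) gᵢ`. -/
def thetaTriality (x : Fin 8 → Fin 4 → F) : Fin 8 → Fin 4 → F :=
  fun i => (Mtriality F).mulVec (x i)

/-! `θ` applies the same matrix `M` to every component, so it is a homomorphism for the bracket
as soon as `M` is an automorphism of the three bilinear maps `σ_{i,i+1}, σ_{i,i+2}, σ_{i,i+4}`
out of which every `σ_{i,j}` is built; this is a polynomial identity once `2` is invertible.
Moreover `M³ = 1`, and the fixed vectors of `M` are the `(a,b,c,0)` with `a + b + c = 0`.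
Both `V^σ[G^×]` and the claimed fixed algebra are spans of the `v gᵢ` (`i ≠ 0`) with `v` in a
subspace `W` of `V`, that is, the elements vanishing at `g_0` with all components in `W`. -/

open Matrix

section PiSingle

variable {ι R V : Type*} [Fintype ι] [DecidableEq ι] [Semiring R] [AddCommMonoid V] [Module R V]

theorem mem_span_pi_single_iff (i₀ : ι) (W : Submodule R V) (x : ι → V) :
    x ∈ Submodule.span R {z | ∃ i, i ≠ i₀ ∧ ∃ r ∈ W, z = Pi.single i r} ↔
      x i₀ = 0 ∧ ∀ i, x i ∈ W := by
  constructor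
  · intro hx
    induction hx using Submodule.span_induction with
    | mem z hz =>
      obtain ⟨i, hi, r, hr, rfl⟩ := hz
      refine ⟨by simp [Ne.symm hi], fun j => ?_⟩
      rw [Pi.single_apply]
      split_ifs
      exacts [hr, W.zero_mem]
    | zero => exact ⟨rfl, fun _ => W.zero_mem⟩
    | add a b _ _ ha hb => exact ⟨by simp [ha.1, hb.1], fun i => W.add_mem (ha.2 i) (hb.2 i)⟩
    | smul c a _ ha => exact ⟨by simp [ha.1], fun i => W.smul_mem c (ha.2 i)⟩
  · rintro ⟨hx₀, hW⟩
    rw [← Finset.univ_sum_single x]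
    refine Submodule.sum_mem _ fun i _ => ?_
    by_cases hi : i = i₀
    · simp [hi, hx₀]
    · exact Submodule.subset_span ⟨i, hi, x i, hW i, rfl⟩

end PiSingle

theorem single_eq_pi_single (i : Fin 8) (r : Fin 4 → F) : single F i r = Pi.single i r := by
  funext k
  simp [single, Pi.single_apply]

theorem mem_VGx_iff (x : Fin 8 → Fin 4 → F) : x ∈ VGx F ↔ x 0 = 0 := by
  simpa [VGx, single_eq_pi_single] using mem_span_pi_single_iff 0 (⊤ : Submodule F (Fin 4 → F)) x

section Equivariance

variable {F}
variable (A : (Fin 4 → F) →ₗ[F] (Fin 4 → F))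

theorem map_sigma (hf1 : ∀ r s, A (f1 F r s) = f1 F (A r) (A s))
    (hf2 : ∀ r s, A (f2 F r s) = f2 F (A r) (A s)) (hf4 : ∀ r s, A (f4 F r s) = f4 F (A r) (A s))
    (i j : Fin 8) (r s : Fin 4 → F) : A (sigma F i j r s) = sigma F i j (A r) (A s) := by
  unfold sigma
  split_ifs <;> simp only [map_zero, map_neg, hf1, hf2, hf4]

theorem map_bracket (hA : ∀ i j r s, A (sigma F i j r s) = sigma F i j (A r) (A s))
    (x y : Fin 8 → Fin 4 → F) :
    (fun k => A (bracket F x y k)) = bracket F (fun i => A (x i)) (fun i => A (y i)) := by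
  funext k
  simp only [bracket, map_sum, apply_ite A, map_zero, hA]

end Equivariance

section Triality

variable {F}

theorem Mtriality_mulVec (v : Fin 4 → F) :
    Mtriality F *ᵥ v = ![2⁻¹ * (v 0 - v 1 - v 2 + v 3), 2⁻¹ * (-v 0 + v 1 - v 2 + v 3),
      2⁻¹ * (-v 0 - v 1 + v 2 + v 3), 2⁻¹ * (-v 0 - v 1 - v 2 - v 3)] := by
  funext k
  fin_cases k <;> simp [Mtriality, mulVec, dotProduct, Fin.sum_univ_four] <;> ring

theorem Mtriality_mulVec_f1 (h2 : (2 : F) ≠ 0) (r s : Fin 4 → F) :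
    Mtriality F *ᵥ f1 F r s = f1 F (Mtriality F *ᵥ r) (Mtriality F *ᵥ s) := by
  funext k
  fin_cases k <;> simp [Mtriality_mulVec, f1] <;> field_simp <;> ring

theorem Mtriality_mulVec_f2 (h2 : (2 : F) ≠ 0) (r s : Fin 4 → F) :
    Mtriality F *ᵥ f2 F r s = f2 F (Mtriality F *ᵥ r) (Mtriality F *ᵥ s) := by
  funext k
  fin_cases k <;> simp [Mtriality_mulVec, f2] <;> field_simp <;> ring

theorem Mtriality_mulVec_f4 (h2 : (2 : F) ≠ 0) (r s : Fin 4 → F) :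
    Mtriality F *ᵥ f4 F r s = f4 F (Mtriality F *ᵥ r) (Mtriality F *ᵥ s) := by
  funext k
  fin_cases k <;> simp [Mtriality_mulVec, f4] <;> field_simp <;> ring

theorem Mtriality_pow_three (h2 : (2 : F) ≠ 0) : Mtriality F ^ 3 = 1 := by
  ext i j
  fin_cases i <;> fin_cases j <;>
    simp [pow_three, Mtriality, Matrix.mul_apply, Fin.sum_univ_four] <;> field_simp <;> norm_num

theorem Mtriality_mulVec_eq_self_iff (h2 : (2 : F) ≠ 0) (r : Fin 4 → F) :
    Mtriality F *ᵥ r = r ↔ r 0 + r 1 + r 2 = 0 ∧ r 3 = 0 := by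
  rw [Mtriality_mulVec]
  constructor
  · intro h
    have e0 := congrFun h 0
    have e3 := congrFun h 3
    simp only [cons_val_zero, cons_val_three, tail_cons, head_cons] at e0 e3
    field_simp at e0 e3
    have hr3 : r 3 = 0 := by
      have h4 : (2 : F) * (2 * r 3) = 0 := by linear_combination e0 - e3
      simpa [h2] using h4
    exact ⟨by linear_combination -e3 - 3 * hr3, hr3⟩
  · rintro ⟨hsum, hr3⟩
    funext k
    fin_cases k <;> simp <;> field_simp
    · linear_combination -hsum + hr3
    · linear_combination -hsum + hr3
    · linear_combination -hsum + hr3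
    · linear_combination -hsum - 3 * hr3

theorem thetaTriality_thetaTriality_thetaTriality (h2 : (2 : F) ≠ 0) (x : Fin 8 → Fin 4 → F) :
    thetaTriality F (thetaTriality F (thetaTriality F x)) = x := by
  funext i
  simp only [thetaTriality, mulVec_mulVec, ← pow_three, Mtriality_pow_three h2, one_mulVec]

theorem thetaTriality_bracket (h2 : (2 : F) ≠ 0) (x y : Fin 8 → Fin 4 → F) :
    thetaTriality F (bracket F x y) = bracket F (thetaTriality F x) (thetaTriality F y) :=
  map_bracket (toLin' (Mtriality F))
    (map_sigma _ (Mtriality_mulVec_f1 h2) (Mtriality_mulVec_f2 h2) (Mtriality_mulVec_f4 h2)) x y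

theorem thetaTriality_eq_self_iff (h2 : (2 : F) ≠ 0) (x : Fin 8 → Fin 4 → F) :
    thetaTriality F x = x ↔ ∀ i, x i 0 + x i 1 + x i 2 = 0 ∧ x i 3 = 0 := by
  simp only [funext_iff (f := thetaTriality F x), thetaTriality, Mtriality_mulVec_eq_self_iff h2]

theorem mapsTo_thetaTriality_VGx : Set.MapsTo (thetaTriality F) (VGx F) (VGx F) := by
  intro x hx
  rw [SetLike.mem_coe, mem_VGx_iff] at hx ⊢
  simp [thetaTriality, hx]

end Triality

/-- **Statement 14.** (char F ≠ 2.)  The map `θ(v gᵢ) = (Mv) gᵢ` of `V^σ[G^×]` is a Lie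
algebra automorphism with `θ³ = id`, whose fixed subalgebra is
`span{(a,b,c,0) gᵢ : a+b+c = 0, i ∈ I}`. -/
theorem triality_automorphism (h2 : (2 : F) ≠ 0) :
    (∀ x ∈ VGx F, thetaTriality F x ∈ VGx F) ∧
    Set.BijOn (thetaTriality F) ↑(VGx F) ↑(VGx F) ∧
    (∀ x ∈ VGx F, ∀ y ∈ VGx F,
      thetaTriality F (bracket F x y) = bracket F (thetaTriality F x) (thetaTriality F y)) ∧
    (∀ x ∈ VGx F, thetaTriality F (thetaTriality F (thetaTriality F x)) = x) ∧
    {x : Fin 8 → Fin 4 → F | x ∈ VGx F ∧ thetaTriality F x = x}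
      = ↑(Submodule.span F
          {z : Fin 8 → Fin 4 → F | ∃ i : Fin 8, i ≠ 0 ∧
            ∃ r : Fin 4 → F, r 0 + r 1 + r 2 = 0 ∧ r 3 = 0 ∧ z = single F i r}) := by
  have hcube := thetaTriality_thetaTriality_thetaTriality h2
  have hmaps := mapsTo_thetaTriality_VGx (F := F)
  refine ⟨hmaps, ?_, fun x _ y _ => thetaTriality_bracket h2 x y, fun x _ => hcube x, ?_⟩
  · exact Set.InvOn.bijOn ⟨fun x _ => hcube x, fun x _ => hcube x⟩ hmaps (hmaps.comp hmaps)
  · ext x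
    have hfix := mem_span_pi_single_iff 0 (Module.End.eigenspace (toLin' (Mtriality F)) 1) x
    simp only [Module.End.mem_eigenspace_iff, toLin'_apply, one_smul,
      Mtriality_mulVec_eq_self_iff h2, and_assoc] at hfix
    simp only [Set.mem_ofPred_eq, SetLike.mem_coe, mem_VGx_iff, thetaTriality_eq_self_iff h2,
      single_eq_pi_single, hfix]

end
end GGA
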